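/- Let (g, [·,·], α) be a multiplicative Hom-Lie algebra and define [x₁,…,x_n]_n = [[…[[x₁,x₂],α(x₃)]…], α^{n−2}(x_n)]. Then (g, [·,…,·]_n, α^{n−1}) is a multiplicative Hom-Lie n-uplet system: (1) [x,x,y₁,…,y_{n−2}]_n = 0; (2) [α^{n−1}(x₁),…,α^{n−1}(x_{n−1}),[y₁,…,y_n]_n]_n = ∑_{i=1}^n [α^{n−1}(y₁),…,[x₁,…,x_{n−1},y_i]_n,…,α^{n−1}(y_n)]_n; (3) α^{n−1} preserves the n-bracket. -/
import Mathlib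


/-- The iterated n-ary bracket (n = m+2):
[x₁,…,x_n]_n = [[x₁,…,x_{n−1}]_{n−1}, α^{n−2}(x_n)], with [x₁,x₂]₂ = [x₁,x₂]. -/
noncomputable def iterBracket {K g : Type*} [Field K] [AddCommGroup g] [Module K g]
    (b : g →ₗ[K] g →ₗ[K] g) (α : g → g) : (m : ℕ) → (Fin (m + 2) → g) → g
  | 0, x => b (x 0) (x 1)
  | m + 1, x =>
      b (iterBracket b α m (fun i => x i.castSucc)) (α^[m + 1] (x (Fin.last (m + 2))))

section aux
variable {K' g' : Type*} [Field K'] [AddCommGroup g'] [Module K' g'] in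
lemma iterBracket_zero (b : g' →ₗ[K'] g' →ₗ[K'] g') (α : g' → g') (x : Fin 2 → g') :
    iterBracket b α 0 x = b (x 0) (x 1) := rfl

variable {K' g' : Type*} [Field K'] [AddCommGroup g'] [Module K' g'] in
lemma iterBracket_succ (b : g' →ₗ[K'] g' →ₗ[K'] g') (α : g' → g') (m : ℕ) (x : Fin (m+3) → g') :
    iterBracket b α (m+1) x =
      b (iterBracket b α m (fun i => x i.castSucc)) (α^[m + 1] (x (Fin.last (m + 2)))) := rfl

variable {K g : Type*} [Field K] [AddCommGroup g] [Module K g]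
  (b : g →ₗ[K] g →ₗ[K] g) (α : g →ₗ[K] g)

/-- head bracket: for m = 0 just the element, for m+1 the iterated (m+1)-ary bracket. -/
noncomputable def hdBr : (m : ℕ) → (Fin (m + 1) → g) → g
  | 0, x => x 0
  | m + 1, x => iterBracket b (⇑α) m x

lemma iter_snoc (m : ℕ) (x : Fin (m + 1) → g) (z : g) :
    iterBracket b (⇑α) m (Fin.snoc x z) = b (hdBr b α m x) ((⇑α)^[m] z) := by
  cases m with
  | zero =>
      rw [iterBracket_zero]
      have h0 : (Fin.snoc x z : Fin 2 → g) 0 = x 0 := by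
        have h : (0 : Fin 2) = Fin.castSucc 0 := rfl
        rw [h, Fin.snoc_castSucc]
      have h1 : (Fin.snoc x z : Fin 2 → g) 1 = z := by
        have h : (1 : Fin 2) = Fin.last 1 := rfl
        rw [h, Fin.snoc_last]
      rw [h0, h1]
      rfl
  | succ m =>
      rw [iterBracket_succ]
      simp only [Fin.snoc_castSucc, Fin.snoc_last]
      rfl

variable (hmult : ∀ x y, α (b x y) = b (α x) (α y))
include hmult

lemma iter_alpha : ∀ (m : ℕ) (x : Fin (m + 2) → g),
    α (iterBracket b (⇑α) m x) = iterBracket b (⇑α) m (fun i => α (x i))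
  | 0, x => hmult _ _
  | m + 1, x => by
      rw [iterBracket_succ, iterBracket_succ, hmult, iter_alpha m]
      show b _ (α ((⇑α)^[m+1] _)) = b _ ((⇑α)^[m+1] (α _))
      rw [← Function.iterate_succ_apply (⇑α), ← Function.iterate_succ_apply' (⇑α)]

lemma iter_alpha_pow (k m : ℕ) (x : Fin (m + 2) → g) :
    (⇑α)^[k] (iterBracket b (⇑α) m x) = iterBracket b (⇑α) m (fun i => (⇑α)^[k] (x i)) := by
  induction k generalizing x with
  | zero => simp
  | succ k ih =>
      rw [Function.iterate_succ_apply', ih, iter_alpha b α hmult]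
      simp only [← Function.iterate_succ_apply' (⇑α)]

lemma hd_alpha_pow (k m : ℕ) (x : Fin (m + 1) → g) :
    (⇑α)^[k] (hdBr b α m x) = hdBr b α m (fun i => (⇑α)^[k] (x i)) := by
  cases m with
  | zero => rfl
  | succ m => exact iter_alpha_pow b α hmult k m x

lemma hmult_pow (k : ℕ) (x y : g) :
    (⇑α)^[k] (b x y) = b ((⇑α)^[k] x) ((⇑α)^[k] y) := by
  induction k with
  | zero => rfl
  | succ k ih => rw [Function.iterate_succ_apply', ih, hmult,
      ← Function.iterate_succ_apply' (⇑α), ← Function.iterate_succ_apply' (⇑α)]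

end aux

section key
variable {K g : Type*} [Field K] [AddCommGroup g] [Module K g]
  (b : g →ₗ[K] g →ₗ[K] g) (α : g →ₗ[K] g)

lemma derivRule (hskew : ∀ x y, b x y = - b y x)
    (hJac : ∀ x y z : g, b (α x) (b y z) + b (α y) (b z x) + b (α z) (b x y) = 0)
    (u v w : g) :
    b (α u) (b v w) = b (b u v) (α w) + b (α v) (b u w) := by
  have h := hJac u v w
  rw [hskew w u, map_neg, hskew (α w) (b u v)] at h
  rw [← sub_eq_zero, ← h]
  abel

lemma update_comp_castSucc {n : ℕ} (F : Fin (n+1) → g) (i : Fin n) (c : g) :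
    (fun k : Fin n => Function.update F i.castSucc c k.castSucc) =
      Function.update (fun j : Fin n => F j.castSucc) i c := by
  funext k
  rcases eq_or_ne k i with rfl | h
  · simp
  · rw [Function.update_of_ne ((Fin.castSucc_injective n).ne h), Function.update_of_ne h]

lemma update_last_comp {n : ℕ} (F : Fin (n+1) → g) (c : g) :
    (fun k : Fin n => Function.update F (Fin.last n) c k.castSucc) =
      fun k => F k.castSucc := by
  funext k
  rw [Function.update_of_ne (Fin.castSucc_lt_last k).ne]

lemma keyLemma (hskew : ∀ x y, b x y = - b y x)
    (hJac : ∀ x y z : g, b (α x) (b y z) + b (α y) (b z x) + b (α z) (b x y) = 0)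
    (hmult : ∀ x y, α (b x y) = b (α x) (α y)) :
    ∀ (m : ℕ) (u : g) (y : Fin (m + 2) → g),
    b ((⇑α)^[m+1] u) (iterBracket b (⇑α) m (fun i => (⇑α)^[m] (y i))) =
      ∑ i : Fin (m + 2), iterBracket b (⇑α) m
        (Function.update (fun j => (⇑α)^[m+1] (y j)) i (b u ((⇑α)^[m] (y i)))) := by
  intro m
  induction m with
  | zero =>
      intro u y
      rw [Fin.sum_univ_two, iterBracket_zero, iterBracket_zero, iterBracket_zero]
      simp only [Function.iterate_one, Function.iterate_zero, id_eq,
        Function.update_self, Function.update_of_ne (show (0:Fin 2) ≠ 1 by decide),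
        Function.update_of_ne (show (1:Fin 2) ≠ 0 by decide)]
      exact derivRule b α hskew hJac u (y 0) (y 1)
  | succ m ih =>
      intro u y
      rw [iterBracket_succ]
      rw [show ((⇑α)^[m+1+1] u) = α ((⇑α)^[m+1] u) from Function.iterate_succ_apply' (⇑α) (m+1) u]
      rw [derivRule b α hskew hJac]
      have hIH := ih u (fun i => α (y i.castSucc))
      simp only [← Function.iterate_succ_apply (⇑α)] at hIH
      simp only [Nat.succ_eq_add_one] at hIH
      rw [hIH, map_sum, LinearMap.sum_apply]
      conv_rhs => rw [Fin.sum_univ_castSucc]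
      congr 1
      · apply Finset.sum_congr rfl
        intro i _
        rw [iterBracket_succ, update_comp_castSucc,
            Function.update_of_ne (Fin.castSucc_lt_last i).ne']
        congr 1
        rw [← Function.iterate_succ_apply' (⇑α), ← Function.iterate_add_apply (⇑α),
            ← Function.iterate_add_apply (⇑α),
            show m + 1 + 1 + (m + 1) = m + 1 + (m + 1 + 1) from by omega]
      · rw [iterBracket_succ, update_last_comp, Function.update_self,
            iter_alpha b α hmult m, hmult_pow b α hmult (m+1)]
        simp only [← Function.iterate_succ_apply' (⇑α)]
end key


section final
variable {K g : Type*} [Field K] [CharZero K] [AddCommGroup g] [Module K g]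
  (b : g →ₗ[K] g →ₗ[K] g) (α : g →ₗ[K] g)

lemma part1 (hskew : ∀ x y, b x y = - b y x) :
    ∀ (m : ℕ) (x : Fin (m + 2) → g), x 0 = x 1 → iterBracket b (⇑α) m x = 0
  | 0, x, h => by
      rw [iterBracket_zero, h]
      have h2 : b (x 1) (x 1) = - b (x 1) (x 1) := hskew _ _
      have h3 : (2 : K) • b (x 1) (x 1) = 0 := by
        rw [two_smul]
        exact add_eq_zero_iff_eq_neg.mpr h2
      rcases smul_eq_zero.mp h3 with h4 | h4
      · exact absurd h4 two_ne_zero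
      · exact h4
  | m + 1, x, h => by
      rw [iterBracket_succ]
      have h0 : iterBracket b (⇑α) m (fun i => x i.castSucc) = 0 :=
        part1 hskew m _ (by simpa using h)
      rw [h0, map_zero, LinearMap.zero_apply]

lemma part2 (hskew : ∀ x y, b x y = - b y x)
    (hJac : ∀ x y z : g, b (α x) (b y z) + b (α y) (b z x) + b (α z) (b x y) = 0)
    (hmult : ∀ x y, α (b x y) = b (α x) (α y))
    (m : ℕ) (x : Fin (m + 1) → g) (y : Fin (m + 2) → g) :
    iterBracket b (⇑α) m
        (Fin.snoc (fun i => (⇑α)^[m + 1] (x i)) (iterBracket b (⇑α) m y)) =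
      ∑ i : Fin (m + 2),
        iterBracket b (⇑α) m
          (Function.update (fun j => (⇑α)^[m + 1] (y j)) i
            (iterBracket b (⇑α) m (Fin.snoc x (y i)))) := by
  rw [iter_snoc b α m, ← hd_alpha_pow b α hmult (m+1) m x,
      iter_alpha_pow b α hmult m m y,
      keyLemma b α hskew hJac hmult m (hdBr b α m x) y]
  simp only [← iter_snoc b α m]

end final

/-- for a multiplicative Hom-Lie algebra (g,[·,·],α), the space g
with the iterated n-bracket (n = m+2) and twisting map α^{n−1} is a
multiplicative Hom-Lie n-uplet system: the n-bracket vanishes when the first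
two arguments coincide, the twisted fundamental identity holds, and α^{n−1}
preserves the n-bracket. -/
theorem iterBracket_homLieNUplet {K g : Type*} [Field K] [CharZero K]
    [AddCommGroup g] [Module K g]
    (b : g →ₗ[K] g →ₗ[K] g) (α : g →ₗ[K] g)
    (hskew : ∀ x y, b x y = - b y x)
    (hJac : ∀ x y z : g, b (α x) (b y z) + b (α y) (b z x) + b (α z) (b x y) = 0)
    (hmult : ∀ x y, α (b x y) = b (α x) (α y))
    (m : ℕ) :
    (∀ x : Fin (m + 2) → g, x 0 = x 1 → iterBracket b (⇑α) m x = 0) ∧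
    (∀ (x : Fin (m + 1) → g) (y : Fin (m + 2) → g),
      iterBracket b (⇑α) m
          (Fin.snoc (fun i => (⇑α)^[m + 1] (x i)) (iterBracket b (⇑α) m y)) =
        ∑ i : Fin (m + 2),
          iterBracket b (⇑α) m
            (Function.update (fun j => (⇑α)^[m + 1] (y j)) i
              (iterBracket b (⇑α) m (Fin.snoc x (y i))))) ∧
    (∀ x : Fin (m + 2) → g,
      (⇑α)^[m + 1] (iterBracket b (⇑α) m x) =
        iterBracket b (⇑α) m (fun i => (⇑α)^[m + 1] (x i))) := by
  exact ⟨part1 b α hskew m, part2 b α hskew hJac hmult m,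
    fun x => iter_alpha_pow b α hmult (m + 1) m x⟩
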